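/- Let n be a positive integer that is an odd square, divisible by 5, with σ(n)/n = 9/5. If q₃ is the third smallest prime divisor of n, then q₃ < p_{⌈180ω(n)/41⌉}, where p_k is the k-th prime. -/

import Mathlib

/-!
A square `n` with `5 ∣ n` and `σ(n)/n = 9/5` is prime to `3`: otherwise `n = 225 s²`, and
`3 ∣ s` or `5 ∣ s` would give a divisor `2025` or `5625` of abundancy above `9/5`, while for `s`
prime to `15` we get `σ(s²)/s² = 405/403`, so `13 ∣ s` and `σ(s²)/s² ≥ 183/169 > 405/403`.
Hence every prime factor of `n` is at least `5` and, as `σ(n)/n ≤ ∏ p/(p-1)`, the two below `q₃`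
contribute at most `5/4 · 7/6 = 35/24`. If `q₃ ≥ M := p_K`, the other `ω - 2` prime factors are
distinct integers `≥ M`, contributing at most the telescoping product `(M + ω - 3)/(M - 1)`.
Since `9/5 - 35/24 = 41/120`, this forces `41 (M - 1) ≤ 175 (ω - 2)`, against
`M - 1 ≥ K ≥ 180 ω / 41`.
-/

open ArithmeticFunction Finset
open scoped ArithmeticFunction.sigma

namespace Nat

lemma abundancyIndex_eq_sigma_div (n : ℕ) : n.abundancyIndex = σ 1 n / n := by
  rw [abundancyIndex, sigma_one_apply, cast_sum]

lemma abundancyIndex_nonneg (n : ℕ) : 0 ≤ n.abundancyIndex := by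
  unfold abundancyIndex
  positivity

lemma abundancyIndex_mul_of_coprime {m n : ℕ} (h : m.Coprime n) :
    (m * n).abundancyIndex = m.abundancyIndex * n.abundancyIndex := by
  simp only [abundancyIndex_eq_sigma_div, isMultiplicative_sigma.map_mul_of_coprime h, cast_mul,
    mul_div_mul_comm]

lemma abundancyIndex_eq_prod_primeFactors {n : ℕ} (hn : n ≠ 0) :
    n.abundancyIndex = ∏ p ∈ n.primeFactors, (p ^ n.factorization p).abundancyIndex :=
  multiplicative_factorization _ (fun _ _ => abundancyIndex_mul_of_coprime)
    (by simp [abundancyIndex]) hn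

lemma abundancyIndex_prime_pow {p : ℕ} (hp : p.Prime) (k : ℕ) :
    (p ^ k).abundancyIndex = (∑ i ∈ range (k + 1), (p : ℚ) ^ i) / p ^ k := by
  rw [abundancyIndex_eq_sigma_div, sigma_one_apply_prime_pow hp]
  push_cast
  rfl

lemma abundancyIndex_prime_pow_lt {p : ℕ} (hp : p.Prime) (k : ℕ) :
    (p ^ k).abundancyIndex < p / (p - 1) := by
  have hp1 : (1 : ℚ) < p := by exact_mod_cast hp.one_lt
  rw [abundancyIndex_prime_pow hp, div_lt_div_iff₀ (by positivity) (by linarith)]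
  calc (∑ i ∈ range (k + 1), (p : ℚ) ^ i) * (p - 1) = p ^ (k + 1) - 1 := geom_sum_mul _ _
    _ < p * p ^ k := by rw [_root_.pow_succ']; linarith

lemma abundancyIndex_le_prod_primeFactors (n : ℕ) :
    n.abundancyIndex ≤ ∏ p ∈ n.primeFactors, (p : ℚ) / (p - 1) := by
  rcases eq_or_ne n 0 with rfl | hn
  · simp [abundancyIndex]
  rw [abundancyIndex_eq_prod_primeFactors hn]
  exact prod_le_prod (fun _ _ => abundancyIndex_nonneg _)
    fun p hp => (abundancyIndex_prime_pow_lt (prime_of_mem_primeFactors hp) _).le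

end Nat

lemma natCast_div_natCast_sub_one_nonneg (p : ℕ) : 0 ≤ (p : ℚ) / (p - 1) := by
  rcases p with _ | p
  · simp
  · rw [Nat.cast_succ, add_sub_cancel_right]
    positivity

lemma div_sub_one_le_div_sub_one {K : Type*} [Field K] [LinearOrder K] [IsStrictOrderedRing K]
    {a b : K} (ha : 1 < a) (hab : a ≤ b) : b / (b - 1) ≤ a / (a - 1) := by
  rw [div_le_div_iff₀ (by linarith) (by linarith)]
  linarith

lemma prod_div_sub_one_le {s : Finset ℕ} {m : ℕ} (hm : 2 ≤ m) (hs : ∀ p ∈ s, m ≤ p) :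
    ∏ p ∈ s, (p : ℚ) / (p - 1) ≤ (m + #s - 1) / (m - 1) := by
  have hm1 : (1 : ℚ) < m := by exact_mod_cast hm
  induction s using Finset.induction_on_min generalizing m with
  | empty => simp [div_self (show (m : ℚ) - 1 ≠ 0 by linarith)]
  | insert a s has ih =>
    have ha : m ≤ a := hs a (mem_insert_self a s)
    have hrest : ∀ p ∈ s, m + 1 ≤ p := fun p hp => ha.trans_lt (has p hp)
    rw [prod_insert fun h => (has a h).false, card_insert_of_notMem fun h => (has a h).false]
    calc (a : ℚ) / (a - 1) * ∏ p ∈ s, (p : ℚ) / (p - 1)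
        ≤ m / (m - 1) * ((↑(m + 1) + #s - 1) / (↑(m + 1) - 1)) :=
          mul_le_mul (div_sub_one_le_div_sub_one hm1 (by exact_mod_cast ha))
            (ih (by omega) hrest (by push_cast; linarith))
            (prod_nonneg fun p _ => natCast_div_natCast_sub_one_nonneg p)
            (natCast_div_natCast_sub_one_nonneg m)
      _ = (m + ↑(#s + 1) - 1) / (m - 1) := by
          push_cast
          field_simp [show (m : ℚ) ≠ 0 by positivity]
          ring

lemma prod_div_sub_one_le_of_card_eq_two {s : Finset ℕ} (hs : #s = 2)
    (hprime : ∀ p ∈ s, p.Prime) (hfive : ∀ p ∈ s, 5 ≤ p) :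
    ∏ p ∈ s, (p : ℚ) / (p - 1) ≤ 35 / 24 := by
  have bound : ∀ p q : ℕ, 5 ≤ p → p < q → q.Prime → (p : ℚ) / (p - 1) * (q / (q - 1)) ≤ 35 / 24 := by
    intro p q hp hpq hq
    have hq7 : 7 ≤ q := by
      by_contra! h
      obtain rfl : q = 6 := by omega
      norm_num at hq
    calc (p : ℚ) / (p - 1) * (q / (q - 1)) ≤ 5 / (5 - 1) * (7 / (7 - 1)) :=
          mul_le_mul (div_sub_one_le_div_sub_one (by norm_num) (by exact_mod_cast hp))
            (div_sub_one_le_div_sub_one (by norm_num) (by exact_mod_cast hq7))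
            (natCast_div_natCast_sub_one_nonneg q) (by norm_num)
      _ = 35 / 24 := by norm_num
  obtain ⟨x, y, hxy, rfl⟩ := card_eq_two.1 hs
  rw [prod_pair hxy]
  rcases hxy.lt_or_gt with h | h
  · exact bound x y (hfive x (by simp)) h (hprime y (by simp))
  · rw [mul_comm]
    exact bound y x (hfive y (by simp)) h (hprime x (by simp))

lemma not_three_dvd_of_abundancyIndex_eq {n : ℕ} (hsq : IsSquare n) (h5 : 5 ∣ n)
    (h : n.abundancyIndex = 9 / 5) : ¬ 3 ∣ n := by
  rintro h3
  obtain ⟨r, rfl⟩ := hsq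
  obtain ⟨s, rfl⟩ : 15 ∣ r := Nat.Coprime.mul_dvd_of_dvd_of_dvd (by norm_num)
    ((Nat.prime_three.dvd_mul.1 h3).elim id id) ((Nat.prime_five.dvd_mul.1 h5).elim id id)
  have hs : s ≠ 0 := by rintro rfl; norm_num [Nat.abundancyIndex] at h
  have hle : ∀ d, d ∣ 15 * s * (15 * s) → d.abundancyIndex ≤ 9 / 5 :=
    fun d hd => h ▸ Nat.abundancyIndex_le_of_dvd (by positivity) hd
  have h3s : ¬ 3 ∣ s := by
    rintro ⟨t, rfl⟩
    have := hle (3 ^ 4 * 5 ^ 2) ⟨t * t, by ring⟩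
    rw [Nat.abundancyIndex_mul_of_coprime (by norm_num), Nat.abundancyIndex_prime_pow Nat.prime_three,
      Nat.abundancyIndex_prime_pow Nat.prime_five] at this
    norm_num [sum_range_succ] at this
  have h5s : ¬ 5 ∣ s := by
    rintro ⟨t, rfl⟩
    have := hle (3 ^ 2 * 5 ^ 4) ⟨t * t, by ring⟩
    rw [Nat.abundancyIndex_mul_of_coprime (by norm_num), Nat.abundancyIndex_prime_pow Nat.prime_three,
      Nat.abundancyIndex_prime_pow Nat.prime_five] at this
    norm_num [sum_range_succ] at this
  have h15s : Nat.Coprime (3 * 5) s := Nat.Coprime.mul_left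
    ((Nat.Prime.coprime_iff_not_dvd Nat.prime_three).2 h3s)
    ((Nat.Prime.coprime_iff_not_dvd Nat.prime_five).2 h5s)
  have hss : (s * s).abundancyIndex = 405 / 403 := by
    rw [show 15 * s * (15 * s) = 3 ^ 2 * 5 ^ 2 * (s * s) by ring,
      Nat.abundancyIndex_mul_of_coprime (by simpa [mul_pow] using (h15s.mul_right h15s).pow_left 2),
      Nat.abundancyIndex_mul_of_coprime (by norm_num), Nat.abundancyIndex_prime_pow Nat.prime_three,
      Nat.abundancyIndex_prime_pow Nat.prime_five] at h
    norm_num [sum_range_succ] at h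
    linarith
  have h13 : 13 ∣ s := by
    have hσ : 403 * σ 1 (s * s) = 405 * (s * s) := by
      rw [Nat.abundancyIndex_eq_sigma_div, div_eq_div_iff (by positivity) (by norm_num)] at hss
      rw [mul_comm]; exact_mod_cast hss
    have : 13 ∣ s * s := Nat.Coprime.dvd_of_dvd_mul_left (by norm_num : Nat.Coprime 13 405)
      (hσ ▸ dvd_mul_of_dvd_left (by norm_num) _)
    exact ((by norm_num : Nat.Prime 13).dvd_mul.1 this).elim id id
  obtain ⟨t, rfl⟩ := h13
  have := hss ▸ Nat.abundancyIndex_le_of_dvd (by positivity) (⟨t * t, by ring⟩ : 13 ^ 2 ∣ 13 * t * (13 * t))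
  rw [Nat.abundancyIndex_prime_pow (by norm_num)] at this
  norm_num [sum_range_succ] at this

lemma five_le_of_mem_primeFactors {n p : ℕ} (hodd : Odd n) (h3 : ¬ 3 ∣ n)
    (hp : p ∈ n.primeFactors) : 5 ≤ p := by
  have hpp := Nat.prime_of_mem_primeFactors hp
  have hpn := Nat.dvd_of_mem_primeFactors hp
  by_contra! h
  interval_cases p
  · exact Nat.not_prime_zero hpp
  · exact Nat.not_prime_one hpp
  · exact hodd.not_two_dvd_nat hpn
  · exact h3 hpn
  · norm_num at hpp

lemma abundancyIndex_le_of_card_primeFactors_lt_eq_two {n q M : ℕ}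
    (hfive : ∀ p ∈ n.primeFactors, 5 ≤ p) (htwo : #(n.primeFactors.filter (· < q)) = 2)
    (hM : 2 ≤ M) (hMq : M ≤ q) :
    n.abundancyIndex ≤ 35 / 24 * ((M + #n.primeFactors - 3) / (M - 1)) := by
  have hcard := card_filter_add_card_filter_not (s := n.primeFactors) (p := (· < q))
  calc n.abundancyIndex ≤ ∏ p ∈ n.primeFactors, (p : ℚ) / (p - 1) :=
        Nat.abundancyIndex_le_prod_primeFactors n
    _ = (∏ p ∈ n.primeFactors.filter (· < q), (p : ℚ) / (p - 1)) *
          ∏ p ∈ n.primeFactors.filter (¬ · < q), (p : ℚ) / (p - 1) :=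
        (prod_filter_mul_prod_filter_not _ _ _).symm
    _ ≤ 35 / 24 * ((M + #(n.primeFactors.filter (¬ · < q)) - 1) / (M - 1)) := by
        refine mul_le_mul (prod_div_sub_one_le_of_card_eq_two htwo
          (fun p hp => Nat.prime_of_mem_primeFactors (mem_filter.1 hp).1)
          (fun p hp => hfive p (mem_filter.1 hp).1))
          (prod_div_sub_one_le hM fun p hp => hMq.trans (not_lt.1 (mem_filter.1 hp).2))
          (prod_nonneg fun p _ => natCast_div_natCast_sub_one_nonneg p) (by norm_num)
    _ = 35 / 24 * ((M + #n.primeFactors - 3) / (M - 1)) := by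
        rw [← hcard, htwo]
        push_cast
        ring_nf

theorem third_prime_bound_general (n : ℕ) (hodd : Odd n) (hsq : IsSquare n)
    (h5 : 5 ∣ n) (habund : (σ 1 n : ℚ) / n = 9 / 5) (q₃ : ℕ)
    (hthird : (n.primeFactors.filter (· < q₃)).card = 2) :
    q₃ < Nat.nth Nat.Prime ((⌈(180 * (n.primeFactors.card : ℚ)) / 41⌉).toNat - 1) := by
  have hidx : n.abundancyIndex = 9 / 5 := by rwa [Nat.abundancyIndex_eq_sigma_div]
  have hfive : ∀ p ∈ n.primeFactors, 5 ≤ p := fun p =>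
    five_le_of_mem_primeFactors hodd (not_three_dvd_of_abundancyIndex_eq hsq h5 hidx)
  set K := (⌈180 * (#n.primeFactors : ℚ) / 41⌉).toNat
  set M := Nat.nth Nat.Prime (K - 1)
  by_contra! hq
  have hKM : K + 1 ≤ M ∧ 2 ≤ M := by have := Nat.add_two_le_nth_prime (K - 1); omega
  have hωK : 180 * (#n.primeFactors : ℚ) / 41 ≤ K := by
    simp only [K, Int.ceil_toNat]
    exact Nat.le_ceil _
  have hbound := abundancyIndex_le_of_card_primeFactors_lt_eq_two hfive hthird hKM.2 hq
  have hKM' : (K : ℚ) + 1 ≤ M := by exact_mod_cast hKM.1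
  rw [hidx, mul_div_assoc', le_div_iff₀ (sub_pos.2 (by exact_mod_cast hKM.2))] at hbound
  linarith [(#n.primeFactors).cast_nonneg (α := ℚ)]

theorem third_prime_bound (n : ℕ) (hn : 0 < n) (hodd : Odd n) (hsq : IsSquare n)
    (h5 : 5 ∣ n) (habund : (σ 1 n : ℚ) / n = 9 / 5) (q₃ : ℕ)
    (hq₃ : q₃ ∈ n.primeFactors) (hthird : (n.primeFactors.filter (· < q₃)).card = 2) :
    q₃ < Nat.nth Nat.Prime ((⌈(180 * (n.primeFactors.card : ℚ)) / 41⌉).toNat - 1) :=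
  third_prime_bound_general n hodd hsq h5 habund q₃ hthird
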